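/- Let P be a set of n points on the half-parabola {(x, x²) : x ≥ 0}. Then any set of disks identifying P has size at least n/3. -/

import Mathlib

noncomputable section

/-- The Euclidean plane. -/
abbrev Pt : Type := EuclideanSpace ℝ (Fin 2)

/-- A disk: a closed Euclidean ball with nonnegative radius. -/
def IsDisk (D : Set Pt) : Prop :=
  ∃ (c : Pt) (r : ℝ), 0 ≤ r ∧ D = Metric.closedBall c r

/-- A family of disks identifies a finite point set: every point is covered and
every pair of distinct points is separated by some disk. -/
def Identifies (𝒟 : Finset (Set Pt)) (P : Finset Pt) : Prop :=
  (∀ p ∈ P, ∃ D ∈ 𝒟, p ∈ D) ∧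
  (∀ p ∈ P, ∀ q ∈ P, p ≠ q → ∃ D ∈ 𝒟, (p ∈ D ∧ q ∉ D) ∨ (q ∈ D ∧ p ∉ D))

/-- Minimum number of disks needed to identify `P`. -/
def gammaID (P : Finset Pt) : ℕ :=
  sInf {k | ∃ 𝒟 : Finset (Set Pt), 𝒟.card = k ∧ (∀ D ∈ 𝒟, IsDisk D) ∧ Identifies 𝒟 P}

/-!
Sort the points by abscissa and append a point of the parabola lying outside every disk.
Consecutive points are then separated by some disk, so its boundary circle crosses the
half-parabola between them. Raising the radius slightly turns the crossings of one circle into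
distinct intersection points of a circle with the open half-parabola, of which there are at most
three, since `(x - a)² + (x² - b)² = t` is a quartic without cubic term. Hence `n ≤ 3 |𝒟|`.
-/

open Finset Filter Topology

def parabolaPt (x : ℝ) : Pt := WithLp.toLp 2 ![x, x ^ 2]

lemma parabolaPt_injective : Function.Injective parabolaPt :=
  fun _ _ h => congrArg (fun p : Pt => p 0) h

@[fun_prop]
lemma continuous_parabolaPt : Continuous parabolaPt := by
  unfold parabolaPt
  fun_prop

lemma dist_parabolaPt_sq (x : ℝ) (c : Pt) :
    dist (parabolaPt x) c ^ 2 = (x - c 0) ^ 2 + (x ^ 2 - c 1) ^ 2 := by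
  rw [EuclideanSpace.dist_eq, Real.sq_sqrt (by positivity), Fin.sum_univ_two]
  simp [parabolaPt, Real.dist_eq, sq_abs]

lemma eventually_parabolaPt_notMem {s : Set Pt} (hs : Bornology.IsBounded s) :
    ∀ᶠ x in atTop, parabolaPt x ∉ s := by
  obtain ⟨R, hR⟩ := hs.subset_closedBall 0
  filter_upwards [eventually_gt_atTop R] with x hRx hxs
  have hx : |x| ≤ ‖parabolaPt x‖ := PiLp.norm_apply_le (parabolaPt x) 0
  linarith [le_abs_self x, mem_closedBall_zero_iff.1 (hR hxs)]

-- Four distinct roots of a quartic without cubic term would sum to zero.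
lemma false_of_four_pos_roots {a b t x₁ x₂ x₃ x₄ : ℝ}
    (h₁ : (x₁ - a) ^ 2 + (x₁ ^ 2 - b) ^ 2 = t) (h₂ : (x₂ - a) ^ 2 + (x₂ ^ 2 - b) ^ 2 = t)
    (h₃ : (x₃ - a) ^ 2 + (x₃ ^ 2 - b) ^ 2 = t) (h₄ : (x₄ - a) ^ 2 + (x₄ ^ 2 - b) ^ 2 = t)
    (h₁₂ : x₁ ≠ x₂) (h₁₃ : x₁ ≠ x₃) (h₁₄ : x₁ ≠ x₄) (h₂₃ : x₂ ≠ x₃) (h₂₄ : x₂ ≠ x₄)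
    (h₃₄ : x₃ ≠ x₄) (p₁ : 0 < x₁) (p₂ : 0 < x₂) (p₃ : 0 < x₃) (p₄ : 0 < x₄) : False := by
  have hvdm : (x₁ - x₂) * (x₁ - x₃) * (x₁ - x₄) * (x₂ - x₃) * (x₂ - x₄) * (x₃ - x₄) ≠ 0 := by
    apply_rules [mul_ne_zero, sub_ne_zero_of_ne]
  have hsum : (x₁ + x₂ + x₃ + x₄) *
      ((x₁ - x₂) * (x₁ - x₃) * (x₁ - x₄) * (x₂ - x₃) * (x₂ - x₄) * (x₃ - x₄)) = 0 := by
    linear_combination ((x₂ - x₃) * (x₂ - x₄) * (x₃ - x₄)) * h₁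
      - ((x₁ - x₃) * (x₁ - x₄) * (x₃ - x₄)) * h₂
      + ((x₁ - x₂) * (x₁ - x₄) * (x₂ - x₄)) * h₃
      - ((x₁ - x₂) * (x₁ - x₃) * (x₂ - x₃)) * h₄
  linarith [(mul_eq_zero.1 hsum).resolve_right hvdm]

lemma card_le_three_of_dist_parabolaPt_eq (c : Pt) (t : ℝ) (s : Finset ℝ)
    (hs : ∀ x ∈ s, 0 < x ∧ dist (parabolaPt x) c = t) : #s ≤ 3 := by
  by_contra! h
  have heq : ∀ x ∈ s, (x - c 0) ^ 2 + (x ^ 2 - c 1) ^ 2 = t ^ 2 := fun x hx => by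
    rw [← dist_parabolaPt_sq, (hs x hx).2]
  obtain ⟨x₁, hx₁⟩ : s.Nonempty := card_pos.1 (by omega)
  obtain ⟨x₂, x₃, x₄, hx₂, hx₃, hx₄, h₂₃, h₂₄, h₃₄⟩ :=
    two_lt_card_iff.1 (by rw [card_erase_of_mem hx₁]; omega : 2 < #(s.erase x₁))
  obtain ⟨h₂₁, hx₂⟩ := mem_erase.1 hx₂
  obtain ⟨h₃₁, hx₃⟩ := mem_erase.1 hx₃
  obtain ⟨h₄₁, hx₄⟩ := mem_erase.1 hx₄
  exact false_of_four_pos_roots (heq _ hx₁) (heq _ hx₂) (heq _ hx₃) (heq _ hx₄)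
    h₂₁.symm h₃₁.symm h₄₁.symm h₂₃ h₂₄ h₃₄
    (hs _ hx₁).1 (hs _ hx₂).1 (hs _ hx₃).1 (hs _ hx₄).1

open Classical in
def crossings {α : Type*} {m : ℕ} (U : Set α) (y : Fin (m + 1) → α) : Finset (Fin m) :=
  univ.filter fun i => Xor (y i.castSucc ∈ U) (y i.succ ∈ U)

lemma mem_crossings {α : Type*} {m : ℕ} {U : Set α} {y : Fin (m + 1) → α} {i : Fin m} :
    i ∈ crossings U y ↔ Xor (y i.castSucc ∈ U) (y i.succ ∈ U) := by
  simp [crossings]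

/-- Perturbing the level `c` to a nearby `t > c` turns every crossing of `{g ≤ c}` into a
strict sign change of `g - t`, hence into a solution of `g = t` strictly inside the gap. -/
theorem card_crossings_sublevel_le {g : ℝ → ℝ} (hg : Continuous g) {S : Set ℝ} {k : ℕ}
    (hlevel : ∀ t (s : Finset ℝ), (∀ x ∈ s, x ∈ S ∧ g x = t) → #s ≤ k)
    {m : ℕ} {y : Fin (m + 1) → ℝ} (hy : StrictMono y) (hyS : Set.Ioo (y 0) (y (Fin.last m)) ⊆ S)
    (c : ℝ) : #(crossings {x | g x ≤ c} y) ≤ k := by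
  obtain ⟨t, hct, ht⟩ : ∃ t, c < t ∧ ∀ j, c < g (y j) → t < g (y j) :=
    ((eventually_mem_nhdsWithin (s := Set.Ioi c)).and (eventually_all.2 fun j =>
      eventually_imp_distrib_left.2 fun hj => eventually_nhdsWithin_of_eventually_nhds
        (eventually_lt_nhds hj))).exists
  have hroot :
      ∀ i ∈ crossings {x | g x ≤ c} y, ∃ z ∈ Set.Ioo (y i.castSucc) (y i.succ), g z = t := by
    intro i hi
    have hle := (hy (Fin.castSucc_lt_succ (i := i))).le
    rcases mem_crossings.1 hi with ⟨hin, hout⟩ | ⟨hin, hout⟩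
    · exact intermediate_value_Ioo hle hg.continuousOn
        ⟨(show g _ ≤ c from hin).trans_lt hct, ht _ (not_le.1 hout)⟩
    · exact intermediate_value_Ioo' hle hg.continuousOn
        ⟨(show g _ ≤ c from hin).trans_lt hct, ht _ (not_le.1 hout)⟩
  choose! z hz hgz using hroot
  have hzmono : StrictMonoOn z (crossings {x | g x ≤ c} y) := fun i hi j hj hij =>
    calc z i < y i.succ := (hz i hi).2
      _ ≤ y j.castSucc := hy.monotone (Fin.succ_le_castSucc_iff.2 hij)
      _ < z j := (hz j hj).1
  rw [← card_image_of_injOn hzmono.injOn]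
  refine hlevel t _ fun x hx => ?_
  obtain ⟨i, hi, rfl⟩ := mem_image.1 hx
  refine ⟨hyS ⟨?_, ?_⟩, hgz i hi⟩
  · exact (hy.monotone (Fin.zero_le _)).trans_lt (hz i hi).1
  · exact (hz i hi).2.trans_le (hy.monotone (Fin.le_last _))

lemma card_crossings_closedBall_le_three (c : Pt) (r : ℝ) {m : ℕ} {y : Fin (m + 1) → ℝ}
    (hy : StrictMono y) (hy₀ : 0 ≤ y 0) :
    #(crossings (parabolaPt ⁻¹' Metric.closedBall c r) y) ≤ 3 :=
  card_crossings_sublevel_le (g := fun x => dist (parabolaPt x) c) (by fun_prop)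
    (card_le_three_of_dist_parabolaPt_eq c) hy (fun _ hx => hy₀.trans_lt hx.1) r

lemma exists_mem_crossings_of_identifies {X : Finset ℝ} {𝒟 : Finset (Set Pt)}
    (hI : Identifies 𝒟 (X.image parabolaPt)) {Z : ℝ} (hXZ : ∀ x ∈ X, x < Z)
    (hZ : ∀ D ∈ 𝒟, parabolaPt Z ∉ D) {m : ℕ} {y : Fin (m + 1) → ℝ} (hy : StrictMono y)
    (hyX : ∀ j, y j ∈ insert Z X) (i : Fin m) : ∃ D ∈ 𝒟, i ∈ crossings (parabolaPt ⁻¹' D) y := by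
  classical
  have hlt : y i.castSucc < y i.succ := hy Fin.castSucc_lt_succ
  have hle : ∀ j, y j ≤ Z := fun j =>
    (mem_insert.1 (hyX j)).elim le_of_eq fun hj => (hXZ _ hj).le
  have hcast : y i.castSucc ∈ X := (mem_insert.1 (hyX _)).resolve_left (hlt.trans_le (hle _)).ne
  rcases mem_insert.1 (hyX i.succ) with hlast | hsucc
  · obtain ⟨D, hD, hin⟩ := hI.1 _ (mem_image_of_mem _ hcast)
    exact ⟨D, hD, mem_crossings.2 (Or.inl ⟨hin, hlast ▸ hZ D hD⟩)⟩
  · obtain ⟨D, hD, hsep⟩ := hI.2 _ (mem_image_of_mem _ hcast) _ (mem_image_of_mem _ hsucc)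
      (parabolaPt_injective.ne hlt.ne)
    exact ⟨D, hD, mem_crossings.2 hsep⟩

theorem halfparabola_lower_bound (P : Finset Pt)
    (hP : ∀ p ∈ P, ∃ x : ℝ, 0 ≤ x ∧ p = (WithLp.toLp 2 ![x, x ^ 2] : Pt))
    (𝒟 : Finset (Set Pt)) (hD : ∀ D ∈ 𝒟, IsDisk D) (hI : Identifies 𝒟 P) :
    (P.card : ℝ) / 3 ≤ (𝒟.card : ℝ) := by
  classical
  obtain ⟨X, hX₀, rfl⟩ : ∃ X : Finset ℝ, (X : Set ℝ) ⊆ Set.Ici 0 ∧ X.image parabolaPt = P :=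
    subset_set_image_iff.1 fun p hp => by
      obtain ⟨x, hx, rfl⟩ := hP p hp
      exact ⟨x, hx, rfl⟩
  obtain ⟨Z, ⟨hZ₀, hXZ⟩, hZ⟩ : ∃ Z, (0 ≤ Z ∧ ∀ x ∈ X, x < Z) ∧ ∀ D ∈ 𝒟, parabolaPt Z ∉ D :=
    ((eventually_ge_atTop 0).and ((eventually_all_finset X).2 fun x _ => eventually_gt_atTop x)
      |>.and ((eventually_all_finset 𝒟).2 fun D hD' => by
        obtain ⟨c, r, -, rfl⟩ := hD D hD'
        exact eventually_parabolaPt_notMem Metric.isBounded_closedBall)).exists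
  have hY : #(insert Z X) = #X + 1 := card_insert_of_notMem fun hZX => (hXZ Z hZX).false
  let y := (insert Z X).orderEmbOfFin hY
  have hy : ∀ j, y j ∈ insert Z X := orderEmbOfFin_mem _ hY
  have hcover : (univ : Finset (Fin #X)) ⊆ 𝒟.biUnion fun D => crossings (parabolaPt ⁻¹' D) y :=
    fun i _ => mem_biUnion.2 (exists_mem_crossings_of_identifies hI hXZ hZ y.strictMono hy i)
  have hcross : ∀ D ∈ 𝒟, #(crossings (parabolaPt ⁻¹' D) y) ≤ 3 := fun D hD' => by
    obtain ⟨c, r, -, rfl⟩ := hD D hD'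
    refine card_crossings_closedBall_le_three c r y.strictMono ?_
    rcases mem_insert.1 (hy 0) with h | h
    exacts [h ▸ hZ₀, hX₀ h]
  have hcount : #X ≤ #𝒟 * 3 := by
    simpa using (card_le_card hcover).trans (card_biUnion_le_card_mul _ _ 3 hcross)
  rw [card_image_of_injective _ parabolaPt_injective, div_le_iff₀ three_pos]
  exact_mod_cast hcount
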